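/- arXiv:2407.04919 — 2 statements merged into one kernel-verified Lean document; each statement's English description precedes it below -/
import Mathlib

section
/- Let k be a field and let k[x,y] be the polynomial ring in two variables over k. The matrix [[1+xy, −x²], [y², 1−xy]] belongs to GL₂(k[x,y]) (it has determinant 1), but it does not belong to the subgroup E₂(k[x,y]) of GL₂(k[x,y]) generated by all elementary 2×2 matrices. -/
open Matrix MvPolynomial

/-- The set of elementary 2×2 matrices (as elements of `GL₂ A`):
matrices of the form `E₁₂(a) = [[1,a],[0,1]]` or `E₂₁(a) = [[1,0],[a,1]]`. -/
def elemSet (A : Type*) [CommRing A] : Set (GL (Fin 2) A) :=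
  {U | ∃ a : A, (U : Matrix (Fin 2) (Fin 2) A) = !![1, a; 0, 1] ∨
      (U : Matrix (Fin 2) (Fin 2) A) = !![1, 0; a, 1]}

/-- `E₂(A)`: the subgroup of `GL₂(A)` generated by all elementary 2×2 matrices. -/
def E2 (A : Type*) [CommRing A] : Subgroup (GL (Fin 2) A) :=
  Subgroup.closure (elemSet A)



section Mats
variable {A : Type*} [CommRing A]

def Ee (a : A) : Matrix (Fin 2) (Fin 2) A := !![a, 1; -1, 0]
def dg (a b : A) : Matrix (Fin 2) (Fin 2) A := !![a, 0; 0, b]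
def prodE (L : List A) : Matrix (Fin 2) (Fin 2) A := (L.map Ee).prod

@[simp] lemma prodE_nil : prodE ([] : List A) = 1 := rfl
lemma prodE_cons (a : A) (L : List A) : prodE (a :: L) = Ee a * prodE L := by
  simp [prodE]
lemma prodE_append (L M : List A) : prodE (L ++ M) = prodE L * prodE M := by
  simp [prodE]
lemma prodE_singleton (a : A) : prodE [a] = Ee a := by simp [prodE]

lemma dg_mul_dg (a b c d : A) : dg a b * dg c d = dg (a * c) (b * d) := by
  simp [dg, Matrix.mul_fin_two]

lemma dg_one : dg (1 : A) 1 = 1 := by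
  rw [dg, Matrix.one_fin_two]

lemma Ee_mul_dg (a c d d' : A) (h : d * d' = 1) :
    Ee a * dg c d = dg d c * Ee (d' * a * c) := by
  ext i j
  fin_cases i <;> fin_cases j <;>
    simp [Ee, dg, Matrix.mul_apply, Fin.sum_univ_two] <;>
    first
      | ring1
      | linear_combination h
      | linear_combination -h
      | linear_combination (a * c) * h
      | linear_combination (-(a * c)) * h

lemma rel_zero (a b : A) : Ee a * Ee 0 * Ee b = dg (-1) (-1) * Ee (a + b) := by
  ext i j
  fin_cases i <;> fin_cases j <;>
    simp [Ee, dg, Matrix.mul_apply, Fin.sum_univ_two] <;> ring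

lemma rel_unit (a b c c' : A) (h : c * c' = 1) :
    Ee a * Ee c * Ee b = Ee (a - c') * dg c c' * Ee (b - c') := by
  ext i j
  fin_cases i <;> fin_cases j <;>
    simp [Ee, dg, Matrix.mul_apply, Fin.sum_univ_two] <;>
    first
      | ring1
      | linear_combination h
      | linear_combination -h
      | linear_combination (a + b - c') * h
      | linear_combination (-(a + b - c')) * h
      | linear_combination b * h
      | linear_combination (-b) * h
      | linear_combination a * h
      | linear_combination (-a) * h

lemma pushL : ∀ (L : List A) (u v : Aˣ), ∃ (u' v' : Aˣ) (L' : List A),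
    L'.length = L.length ∧ prodE L * dg (u : A) (v : A) = dg (u' : A) (v' : A) * prodE L'
  | [], u, v => ⟨u, v, [], rfl, by simp⟩
  | a :: t, u, v => by
    obtain ⟨u₁, v₁, t₁, hlen, ht⟩ := pushL t u v
    refine ⟨v₁, u₁, (((v₁⁻¹ : Aˣ) : A) * a * (u₁ : A)) :: t₁, by simp [hlen], ?_⟩
    rw [prodE_cons, mul_assoc, ht, ← mul_assoc,
      Ee_mul_dg a (u₁ : A) (v₁ : A) ((v₁⁻¹ : Aˣ) : A) (Units.mul_inv v₁),
      prodE_cons, mul_assoc]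

-- entry lemmas
variable (M N : Matrix (Fin 2) (Fin 2) A) (a b : A)

lemma mul_Ee_00 : (M * Ee b) 0 0 = M 0 0 * b - M 0 1 := by
  simp [Ee, Matrix.mul_apply, Fin.sum_univ_two]; ring
lemma mul_Ee_01 : (M * Ee b) 0 1 = M 0 0 := by
  simp [Ee, Matrix.mul_apply, Fin.sum_univ_two]
lemma mul_Ee_10 : (M * Ee b) 1 0 = M 1 0 * b - M 1 1 := by
  simp [Ee, Matrix.mul_apply, Fin.sum_univ_two]; ring
lemma mul_Ee_11 : (M * Ee b) 1 1 = M 1 0 := by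
  simp [Ee, Matrix.mul_apply, Fin.sum_univ_two]
lemma Ee_mul_0j (j : Fin 2) : (Ee a * N) 0 j = a * N 0 j + N 1 j := by
  simp [Ee, Matrix.mul_apply, Fin.sum_univ_two]
lemma Ee_mul_1j (j : Fin 2) : (Ee a * N) 1 j = -(N 0 j) := by
  simp [Ee, Matrix.mul_apply, Fin.sum_univ_two]
lemma dg_mul_0j (j : Fin 2) : (dg a b * M) 0 j = a * M 0 j := by
  simp [dg, Matrix.mul_apply, Fin.sum_univ_two]
lemma dg_mul_1j (j : Fin 2) : (dg a b * M) 1 j = b * M 1 j := by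
  simp [dg, Matrix.mul_apply, Fin.sum_univ_two]
@[simp] lemma Ee_00 : Ee a 0 0 = a := rfl
@[simp] lemma Ee_01 : Ee a 0 1 = 1 := rfl
@[simp] lemma Ee_10 : Ee a 1 0 = -1 := rfl
@[simp] lemma Ee_11 : Ee a 1 1 = 0 := rfl

end Mats

section ListSplit
variable {A : Type*}

lemma split_of_mem_tail_dropLast {c : A} : ∀ {L : List A}, c ∈ L.tail.dropLast →
    ∃ (P : List A) (x y : A) (S : List A), L = P ++ x :: c :: y :: S := by
  rintro (_ | ⟨hd, t⟩) hc
  · simp at hc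
  · simp only [List.tail_cons] at hc
    rcases t.eq_nil_or_concat with rfl | ⟨t', z, rfl⟩
    · simp at hc
    · simp only [List.concat_eq_append, List.dropLast_concat] at hc
      obtain ⟨A1, B1, rfl⟩ := List.append_of_mem hc
      rcases (hd :: A1).eq_nil_or_concat with h | ⟨P, x, hP⟩
      · simp at h
      · simp only [List.concat_eq_append] at hP
        rcases B1 with _ | ⟨y, B'⟩
        · exact ⟨P, x, z, [], by
            rw [show P ++ [x, c, z] = (P ++ [x]) ++ ([c] ++ [z]) by simp, ← hP]; simp⟩
        · exact ⟨P, x, y, B' ++ [z], by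
            rw [show P ++ x :: c :: y :: (B' ++ [z]) = (P ++ [x]) ++ (c :: y :: (B' ++ [z])) by simp,
              ← hP]; simp⟩

lemma list_length_le_sum : ∀ (L : List ℕ), (∀ a ∈ L, 1 ≤ a) → L.length ≤ L.sum := by
  intro L
  induction L with
  | nil => simp
  | cons a t ih =>
    intro h
    have h1 := h a (by simp)
    have h2 := ih (fun b hb => h b (by simp [hb]))
    simp only [List.length_cons, List.sum_cons]
    omega

end ListSplit

section Field
variable {k : Type*} [Field k]

local notation "R" => MvPolynomial (Fin 2) k

lemma const_eq_C {p : R} (h : p.totalDegree = 0) : p = C (coeff 0 p) := by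
  ext m
  rcases eq_or_ne m 0 with rfl | hm
  · simp
  · rw [coeff_C, if_neg (Ne.symm hm)]
    by_contra hne
    exact hm (Finsupp.ext fun x => (totalDegree_eq_zero_iff (Fin 2) p).1 h m
      (mem_support_iff.2 hne) x)

lemma norm_lemma : ∀ (n : ℕ) (L : List R), L.length ≤ n →
    ∃ (u v : Rˣ) (L' : List R), (∀ p ∈ L'.tail.dropLast, p.totalDegree ≠ 0) ∧
      prodE L = dg (u : R) (v : R) * prodE L' := by
  intro n
  induction n with
  | zero =>
    intro L hL
    exact ⟨1, 1, L, by rw [List.length_eq_zero_iff.1 (Nat.le_zero.1 hL)]; simp, by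
      rw [Units.val_one, dg_one, one_mul]⟩
  | succ n ih =>
    intro L hL
    by_cases hgood : ∀ p ∈ L.tail.dropLast, p.totalDegree ≠ 0
    · exact ⟨1, 1, L, hgood, by rw [Units.val_one, dg_one, one_mul]⟩
    · push_neg at hgood
      obtain ⟨c, hcmem, hcdeg⟩ := hgood
      obtain ⟨P, x, y, S, rfl⟩ := split_of_mem_tail_dropLast hcmem
      have hlen : P.length + 3 + S.length ≤ n + 1 := by simp at hL; omega
      have hprod : prodE (P ++ x :: c :: y :: S) =
          prodE P * ((Ee x * Ee c * Ee y) * prodE S) := by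
        rw [prodE_append, prodE_cons, prodE_cons, prodE_cons]
        simp only [mul_assoc]
      by_cases hc0 : c = 0
      · -- zero case
        subst hc0
        rw [rel_zero] at hprod
        obtain ⟨u', v', P', hPlen, hP⟩ := pushL P (-1 : Rˣ) (-1 : Rˣ)
        rw [show ((-1 : Rˣ) : R) = (-1 : R) by simp] at hP
        have h2 : prodE (P ++ x :: (0:R) :: y :: S) =
            dg (u' : R) (v' : R) * prodE (P' ++ (x + y) :: S) := by
          rw [hprod, prodE_append, prodE_cons]
          simp only [← mul_assoc]
          rw [hP]
        obtain ⟨u'', v'', L'', hgood'', hL''⟩ := ih (P' ++ (x + y) :: S)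
          (by simp [hPlen]; omega)
        exact ⟨u' * u'', v' * v'', L'', hgood'', by
          rw [h2, hL'', ← mul_assoc, Units.val_mul, Units.val_mul, dg_mul_dg]⟩
      · -- unit case
        have hc : c = C (coeff 0 c) := const_eq_C hcdeg
        set c₀ := coeff 0 c with hc₀
        have hc₀ne : c₀ ≠ 0 := fun h => hc0 (by rw [hc, h, C_0])
        have hcc' : c * C c₀⁻¹ = 1 := by
          rw [hc, ← C_mul, mul_inv_cancel₀ hc₀ne, C_1]
        have hc'c : C c₀⁻¹ * c = 1 := by rw [mul_comm]; exact hcc'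
        rw [rel_unit x y c (C c₀⁻¹) hcc'] at hprod
        set cu : Rˣ := ⟨c, C c₀⁻¹, hcc', hc'c⟩ with hcu
        obtain ⟨u', v', P', hPlen, hP⟩ := pushL (P ++ [x - C c₀⁻¹]) cu cu⁻¹
        have hval : ((cu : Rˣ) : R) = c := rfl
        have hval' : ((cu⁻¹ : Rˣ) : R) = C c₀⁻¹ := rfl
        rw [hval, hval'] at hP
        have h2 : prodE (P ++ x :: c :: y :: S) =
            dg (u' : R) (v' : R) * prodE (P' ++ (y - C c₀⁻¹) :: S) := by
          rw [prodE_append, prodE_singleton] at hP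
          rw [hprod, prodE_append, prodE_cons]
          simp only [← mul_assoc]
          rw [hP]
        obtain ⟨u'', v'', L'', hgood'', hL''⟩ := ih (P' ++ (y - C c₀⁻¹) :: S)
          (by simp [hPlen] at *; omega)
        exact ⟨u' * u'', v' * v'', L'', hgood'', by
          rw [h2, hL'', ← mul_assoc, Units.val_mul, Units.val_mul, dg_mul_dg]⟩

end Field

lemma hcomp_top_ne_zero {σ K : Type*} [CommRing K] (f : MvPolynomial σ K) (hf : f ≠ 0) :
    homogeneousComponent f.totalDegree f ≠ 0 := by
  classical
  obtain ⟨m, hm, h⟩ := Finset.exists_mem_eq_sup f.support (support_nonempty.2 hf)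
    (fun s : (σ →₀ ℕ) => s.sum fun _ e => e)
  intro h0
  have hc := coeff_homogeneousComponent (σ := σ) f.totalDegree f m
  rw [h0, coeff_zero, if_pos] at hc
  · exact (mem_support_iff.1 hm) hc.symm
  · rw [MvPolynomial.totalDegree, h]
    simp [Finsupp.degree, Finsupp.sum]
    rfl

lemma totalDegree_mul_eq' {σ K : Type*} [CommRing K] [IsDomain K] {f g : MvPolynomial σ K}
    (hf : f ≠ 0) (hg : g ≠ 0) :
    (f * g).totalDegree = f.totalDegree + g.totalDegree := by
  classical
  set d := f.totalDegree with hd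
  set e := g.totalDegree with he
  refine le_antisymm (totalDegree_mul f g) ?_
  set Hf := homogeneousComponent d f with hHfdef
  set Hg := homogeneousComponent e g with hHgdef
  have hHf : Hf ≠ 0 := hcomp_top_ne_zero f hf
  have hHg : Hg ≠ 0 := hcomp_top_ne_zero g hg
  have hHfh : Hf.IsHomogeneous d := homogeneousComponent_isHomogeneous d f
  have hHgh : Hg.IsHomogeneous e := homogeneousComponent_isHomogeneous e g
  have hHfmem : Hf ∈ homogeneousSubmodule σ K d := (mem_homogeneousSubmodule _ _).2 hHfh
  have hHgmem : Hg ∈ homogeneousSubmodule σ K e := (mem_homogeneousSubmodule _ _).2 hHgh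
  have keyf : f - Hf = 0 ∨ (f - Hf).totalDegree < d := by
    by_cases h0 : f - Hf = 0
    · exact Or.inl h0
    · right
      have hle : (f - Hf).totalDegree ≤ d := by
        have := totalDegree_add f (-Hf)
        rw [totalDegree_neg] at this
        exact le_trans (by rw [sub_eq_add_neg]; exact this) (max_le le_rfl hHfh.totalDegree_le)
      rcases lt_or_eq_of_le hle with h | h
      · exact h
      · exfalso
        have : homogeneousComponent d (f - Hf) = 0 := by
          rw [map_sub, homogeneousComponent_of_mem hHfmem, if_pos rfl, sub_self]
        have := hcomp_top_ne_zero (f - Hf) h0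
        rw [h] at this
        exact this ‹homogeneousComponent d (f - Hf) = 0›
  have keyg : g - Hg = 0 ∨ (g - Hg).totalDegree < e := by
    by_cases h0 : g - Hg = 0
    · exact Or.inl h0
    · right
      have hle : (g - Hg).totalDegree ≤ e := by
        have := totalDegree_add g (-Hg)
        rw [totalDegree_neg] at this
        exact le_trans (by rw [sub_eq_add_neg]; exact this) (max_le le_rfl hHgh.totalDegree_le)
      rcases lt_or_eq_of_le hle with h | h
      · exact h
      · exfalso
        have h1 : homogeneousComponent e (g - Hg) = 0 := by
          rw [map_sub, homogeneousComponent_of_mem hHgmem, if_pos rfl, sub_self]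
        exact hcomp_top_ne_zero (g - Hg) h0 (h ▸ h1)
  have hsplit : f * g = Hf * Hg + (Hf * (g - Hg) + (f - Hf) * g) := by ring
  have hz1 : homogeneousComponent (d + e) (Hf * (g - Hg)) = 0 := by
    rcases keyg with h0 | hlt
    · rw [h0, mul_zero, map_zero]
    · apply homogeneousComponent_eq_zero
      calc (Hf * (g - Hg)).totalDegree ≤ Hf.totalDegree + (g - Hg).totalDegree :=
            totalDegree_mul _ _
        _ < d + e := by
            have := hHfh.totalDegree_le
            omega
  have hz2 : homogeneousComponent (d + e) ((f - Hf) * g) = 0 := by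
    rcases keyf with h0 | hlt
    · rw [h0, zero_mul, map_zero]
    · apply homogeneousComponent_eq_zero
      calc ((f - Hf) * g).totalDegree ≤ (f - Hf).totalDegree + g.totalDegree :=
            totalDegree_mul _ _
        _ < d + e := by omega
  have hmain : homogeneousComponent (d + e) (f * g) = Hf * Hg := by
    rw [hsplit, map_add, map_add, hz1, hz2,
      homogeneousComponent_of_mem ((mem_homogeneousSubmodule _ _).2 (hHfh.mul hHgh)),
      if_pos rfl]
    ring
  by_contra hcon
  push_neg at hcon
  have : homogeneousComponent (d + e) (f * g) = 0 := homogeneousComponent_eq_zero _ (f*g) hcon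
  rw [hmain] at this
  exact mul_ne_zero hHf hHg this

section Deg
variable {k : Type*} [Field k]
local notation "R" => MvPolynomial (Fin 2) k

lemma deg_sub_eq_left {f g : R} (h : g.totalDegree < f.totalDegree) :
    (f - g).totalDegree = f.totalDegree := by
  rw [sub_eq_add_neg, totalDegree_add_eq_left_of_totalDegree_lt (by rwa [totalDegree_neg])]

lemma ne_zero_of_deg_ne_zero {f : R} (h : f.totalDegree ≠ 0) : f ≠ 0 :=
  fun h0 => h (by rw [h0, totalDegree_zero])

lemma degL : ∀ (L : List R), L ≠ [] → (∀ a ∈ L, a.totalDegree ≠ 0) →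
    (prodE L) 0 0 ≠ 0 ∧ ((prodE L) 0 0).totalDegree = (L.map totalDegree).sum ∧
    ((prodE L) 0 1).totalDegree < ((prodE L) 0 0).totalDegree := by
  intro L
  induction L using List.reverseRecOn with
  | nil => intro h; exact absurd rfl h
  | append_singleton T b ih =>
    intro _ hdeg
    have hb : b.totalDegree ≠ 0 := hdeg b (by simp)
    have hbne : b ≠ 0 := ne_zero_of_deg_ne_zero hb
    rcases eq_or_ne T [] with rfl | hT
    · rw [List.nil_append, prodE_singleton]
      refine ⟨by simpa using hbne, by simp, ?_⟩
      simp only [Ee_00, Ee_01, totalDegree_one]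
      omega
    · obtain ⟨hT0, hTsum, hTlt⟩ := ih hT (fun a ha => hdeg a (by simp [ha]))
      rw [prodE_append, prodE_singleton, mul_Ee_00, mul_Ee_01]
      have dmul : ((prodE T) 0 0 * b).totalDegree
          = ((prodE T) 0 0).totalDegree + b.totalDegree := totalDegree_mul_eq' hT0 hbne
      have hlt2 : ((prodE T) 0 1).totalDegree < ((prodE T) 0 0 * b).totalDegree := by
        rw [dmul]; omega
      have h00 : ((prodE T) 0 0 * b - (prodE T) 0 1).totalDegree
          = ((prodE T) 0 0).totalDegree + b.totalDegree := by
        rw [deg_sub_eq_left hlt2, dmul]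
      refine ⟨?_, ?_, ?_⟩
      · intro h
        rw [sub_eq_zero] at h
        rw [h] at hlt2
        omega
      · rw [h00, hTsum]; simp
      · rw [h00]; omega

lemma unit_deg (w : Rˣ) : (w : R).totalDegree = 0 := by
  have h2 := totalDegree_mul_eq' (Units.ne_zero w) (Units.ne_zero w⁻¹)
  rw [Units.mul_inv, totalDegree_one] at h2
  omega

lemma unit_exists_C (w : Rˣ) : ∃ e : k, e ≠ 0 ∧ (w : R) = C e := by
  refine ⟨coeff 0 (w : R), fun h => ?_, const_eq_C (unit_deg w)⟩
  have h2 := const_eq_C (unit_deg w)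
  rw [h, C_0] at h2
  exact Units.ne_zero w h2

lemma deg_xy : (X 0 * X 1 : R).totalDegree = 2 := by
  rw [totalDegree_mul_eq' (X_ne_zero 0) (X_ne_zero 1), totalDegree_X, totalDegree_X]

lemma xy_ne_zero : (X 0 * X 1 : R) ≠ 0 := ne_zero_of_deg_ne_zero (by rw [deg_xy]; omega)

lemma deg_one_sub_xy : (1 - X 0 * X 1 : R).totalDegree = 2 := by
  have h : (1 - X 0 * X 1 : R) = -(X 0 * X 1) + 1 := by ring
  rw [h, totalDegree_add_eq_left_of_totalDegree_lt
    (by rw [totalDegree_neg, deg_xy, totalDegree_one]; omega), totalDegree_neg, deg_xy]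

lemma one_sub_xy_ne_zero : (1 - X 0 * X 1 : R) ≠ 0 :=
  ne_zero_of_deg_ne_zero (by rw [deg_one_sub_xy]; omega)

lemma X0X1_eq : (X 0 * X 1 : R) =
    monomial (Finsupp.single 0 1 + Finsupp.single 1 1) 1 := by
  rw [X, X, monomial_mul, one_mul]

lemma coeff_xy_xy : coeff (Finsupp.single 0 1 + Finsupp.single 1 1) (X 0 * X 1 : R) = 1 := by
  rw [X0X1_eq, coeff_monomial, if_pos rfl]

lemma coeff_xy_x2 : coeff (Finsupp.single 0 1 + Finsupp.single 1 1) (X 0 ^ 2 : R) = 0 := by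
  rw [X_pow_eq_monomial, coeff_monomial, if_neg]
  intro h
  have h2 := DFunLike.congr_fun h 1
  simp [Finsupp.single_apply] at h2

lemma coeff_xy_one : coeff (Finsupp.single 0 1 + Finsupp.single 1 1) (1 : R) = 0 := by
  rw [coeff_one, if_neg]
  intro h
  have h2 := DFunLike.congr_fun h 0
  simp [Finsupp.single_apply] at h2

lemma coeff_xy_C (e : k) : coeff (Finsupp.single 0 1 + Finsupp.single 1 1) (C e : R) = 0 := by
  rw [coeff_C, if_neg]
  intro h
  have h2 := DFunLike.congr_fun h 0
  simp [Finsupp.single_apply] at h2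

lemma coeff_xy_of_deg_lt {s : R} (h : s.totalDegree < 2) :
    coeff (Finsupp.single 0 1 + Finsupp.single 1 1) s = 0 := by
  by_contra hne
  have h2 := le_totalDegree (p := s) (mem_support_iff.2 hne)
  have h3 : ((Finsupp.single (0 : Fin 2) 1 + Finsupp.single 1 1).sum fun _ e => e) = 2 := by
    rw [Finsupp.sum_add_index (by simp) (by simp)]
    simp
  omega

lemma coeff_y2_y2 : coeff (Finsupp.single 1 2) (X 1 ^ 2 : R) = 1 := by
  rw [X_pow_eq_monomial, coeff_monomial, if_pos rfl]

lemma coeff_y2_xy : coeff (Finsupp.single 1 2) (X 0 * X 1 : R) = 0 := by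
  rw [X0X1_eq, coeff_monomial, if_neg]
  intro h
  have h2 := DFunLike.congr_fun h 0
  simp [Finsupp.single_apply] at h2

lemma coeff_y2_one : coeff (Finsupp.single 1 2) (1 : R) = 0 := by
  rw [coeff_one, if_neg]
  intro h
  have h2 := DFunLike.congr_fun h 1
  simp [Finsupp.single_apply] at h2

lemma coeff_y2_C (e : k) : coeff (Finsupp.single 1 2) (C e : R) = 0 := by
  rw [coeff_C, if_neg]
  intro h
  have h2 := DFunLike.congr_fun h 1
  simp [Finsupp.single_apply] at h2

end Deg

section Gen
variable {A : Type*} [CommRing A]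

lemma e12_form (a : A) : !![(1:A), a; 0, 1] = dg (-1) (-1) * prodE [-a, 0] := by
  show _ = dg (-1) (-1) * (Ee (-a) * (Ee 0 * 1))
  ext i j
  fin_cases i <;> fin_cases j <;>
    simp [Ee, dg, Matrix.mul_apply, Fin.sum_univ_two]

lemma e21_form (a : A) : !![(1:A), 0; a, 1] = dg (-1) (-1) * prodE [0, a] := by
  show _ = dg (-1) (-1) * (Ee 0 * (Ee a * 1))
  ext i j
  fin_cases i <;> fin_cases j <;>
    simp [Ee, dg, Matrix.mul_apply, Fin.sum_univ_two]

lemma e12_mul_e12 (a : A) : !![(1:A), a; 0, 1] * !![(1:A), -a; 0, 1] = 1 := by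
  rw [Matrix.mul_fin_two, Matrix.one_fin_two]
  congr 1 <;> ring

lemma e21_mul_e21 (a : A) : !![(1:A), 0; a, 1] * !![(1:A), 0; -a, 1] = 1 := by
  rw [Matrix.mul_fin_two, Matrix.one_fin_two]
  congr 1 <;> ring

lemma Qmul {M N : Matrix (Fin 2) (Fin 2) A}
    (hM : ∃ (u v : Aˣ) (L : List A), M = dg (u : A) (v : A) * prodE L)
    (hN : ∃ (u v : Aˣ) (L : List A), N = dg (u : A) (v : A) * prodE L) :
    ∃ (u v : Aˣ) (L : List A), M * N = dg (u : A) (v : A) * prodE L := by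
  obtain ⟨u1, v1, L1, rfl⟩ := hM
  obtain ⟨u2, v2, L2, rfl⟩ := hN
  obtain ⟨u', v', L1', _, hp⟩ := pushL L1 u2 v2
  refine ⟨u1 * u', v1 * v', L1' ++ L2, ?_⟩
  rw [prodE_append, Units.val_mul, Units.val_mul, ← dg_mul_dg]
  calc dg (u1 : A) (v1 : A) * prodE L1 * (dg (u2 : A) (v2 : A) * prodE L2)
      = dg (u1 : A) (v1 : A) * (prodE L1 * dg (u2 : A) (v2 : A)) * prodE L2 := by
        simp only [mul_assoc]
    _ = dg (u1 : A) (v1 : A) * (dg (u' : A) (v' : A) * prodE L1') * prodE L2 := by rw [hp]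
    _ = dg (u1 : A) (v1 : A) * dg (u' : A) (v' : A) * (prodE L1' * prodE L2) := by
        simp only [mul_assoc]

end Gen

/-- The matrix `[[1+xy, −x²], [y², 1−xy]]` over `k[x,y]` has determinant 1
(hence lies in `GL₂(k[x,y])`), but it does not lie in `E₂(k[x,y])`. -/
theorem anick_matrix_transpose_not_in_E2 (k : Type*) [Field k] :
    (!![1 + X 0 * X 1, -(X 0) ^ 2; (X 1) ^ 2, 1 - X 0 * X 1] :
        Matrix (Fin 2) (Fin 2) (MvPolynomial (Fin 2) k)).det = 1 ∧
    ∀ U : GL (Fin 2) (MvPolynomial (Fin 2) k),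
      (U : Matrix (Fin 2) (Fin 2) (MvPolynomial (Fin 2) k)) =
        !![1 + X 0 * X 1, -(X 0) ^ 2; (X 1) ^ 2, 1 - X 0 * X 1] →
      U ∉ E2 (MvPolynomial (Fin 2) k) := by
  set R' := MvPolynomial (Fin 2) k with hR'
  constructor
  · rw [Matrix.det_fin_two_of]; ring
  · intro U hU hmem
    -- Step 1: every element of E2 has the form dg u v * prodE L
    have main : ∀ W : GL (Fin 2) R', W ∈ E2 R' →
        (∃ (u v : R'ˣ) (L : List R'),
          (W : Matrix (Fin 2) (Fin 2) R') = dg (u : R') (v : R') * prodE L) ∧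
        (∃ (u v : R'ˣ) (L : List R'),
          ((W⁻¹ : GL (Fin 2) R') : Matrix (Fin 2) (Fin 2) R')
            = dg (u : R') (v : R') * prodE L) := by
      intro W hW
      refine Subgroup.closure_induction ?_ ?_ ?_ ?_ hW
      · -- generators
        rintro x ⟨a, hx | hx⟩
        · have hxinv : ((x⁻¹ : GL (Fin 2) R') : Matrix (Fin 2) (Fin 2) R')
              = !![(1:R'), -a; 0, 1] := by
            have h1 : ((x⁻¹ : GL (Fin 2) R') : Matrix (Fin 2) (Fin 2) R')
                * (x : Matrix (Fin 2) (Fin 2) R') = 1 := by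
              rw [← Units.val_mul, inv_mul_cancel, Units.val_one]
            calc ((x⁻¹ : GL (Fin 2) R') : Matrix (Fin 2) (Fin 2) R')
                = ((x⁻¹ : GL (Fin 2) R') : Matrix (Fin 2) (Fin 2) R')
                  * ((x : Matrix (Fin 2) (Fin 2) R') * !![(1:R'), -a; 0, 1]) := by
                  rw [hx, e12_mul_e12, mul_one]
              _ = (((x⁻¹ : GL (Fin 2) R') : Matrix (Fin 2) (Fin 2) R')
                  * (x : Matrix (Fin 2) (Fin 2) R')) * !![(1:R'), -a; 0, 1] := by
                  rw [mul_assoc]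
              _ = !![(1:R'), -a; 0, 1] := by rw [h1, one_mul]
          constructor
          · exact ⟨-1, -1, [-a, 0], by
              rw [hx, e12_form]; simp⟩
          · exact ⟨-1, -1, [a, 0], by
              rw [hxinv, e12_form (-a), neg_neg]; simp⟩
        · have hxinv : ((x⁻¹ : GL (Fin 2) R') : Matrix (Fin 2) (Fin 2) R')
              = !![(1:R'), 0; -a, 1] := by
            have h1 : ((x⁻¹ : GL (Fin 2) R') : Matrix (Fin 2) (Fin 2) R')
                * (x : Matrix (Fin 2) (Fin 2) R') = 1 := by
              rw [← Units.val_mul, inv_mul_cancel, Units.val_one]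
            calc ((x⁻¹ : GL (Fin 2) R') : Matrix (Fin 2) (Fin 2) R')
                = ((x⁻¹ : GL (Fin 2) R') : Matrix (Fin 2) (Fin 2) R')
                  * ((x : Matrix (Fin 2) (Fin 2) R') * !![(1:R'), 0; -a, 1]) := by
                  rw [hx, e21_mul_e21, mul_one]
              _ = (((x⁻¹ : GL (Fin 2) R') : Matrix (Fin 2) (Fin 2) R')
                  * (x : Matrix (Fin 2) (Fin 2) R')) * !![(1:R'), 0; -a, 1] := by
                  rw [mul_assoc]
              _ = !![(1:R'), 0; -a, 1] := by rw [h1, one_mul]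
          constructor
          · exact ⟨-1, -1, [0, a], by rw [hx, e21_form]; simp⟩
          · exact ⟨-1, -1, [0, -a], by rw [hxinv, e21_form (-a)]; simp⟩
      · -- one
        constructor
        · exact ⟨1, 1, [], by simp [dg_one]⟩
        · exact ⟨1, 1, [], by simp [dg_one]⟩
      · -- mul
        rintro x y _ _ ⟨px, px'⟩ ⟨py, py'⟩
        constructor
        · have : ((x * y : GL (Fin 2) R') : Matrix (Fin 2) (Fin 2) R')
              = (x : Matrix (Fin 2) (Fin 2) R') * (y : Matrix (Fin 2) (Fin 2) R') :=
            Units.val_mul x y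
          rw [this]
          exact Qmul px py
        · have : (((x * y)⁻¹ : GL (Fin 2) R') : Matrix (Fin 2) (Fin 2) R')
              = ((y⁻¹ : GL (Fin 2) R') : Matrix (Fin 2) (Fin 2) R')
                * ((x⁻¹ : GL (Fin 2) R') : Matrix (Fin 2) (Fin 2) R') := by
            rw [_root_.mul_inv_rev, Units.val_mul]
          rw [this]
          exact Qmul py' px'
      · -- inv
        rintro x _ ⟨px, px'⟩
        exact ⟨px', by rw [inv_inv]; exact px⟩
    obtain ⟨⟨u1, v1, L0, hL0⟩, -⟩ := main U hmem
    obtain ⟨u2, v2, L, hgood, hnorm⟩ := norm_lemma L0.length L0 le_rfl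
    set w1 : R'ˣ := u1 * u2 with hw1
    set w2 : R'ˣ := v1 * v2 with hw2
    have hM : (!![1 + X 0 * X 1, -(X 0) ^ 2; (X 1) ^ 2, 1 - X 0 * X 1] :
          Matrix (Fin 2) (Fin 2) R')
        = dg (w1 : R') (w2 : R') * prodE L := by
      rw [← hU, hL0, hnorm, ← mul_assoc, hw1, hw2, Units.val_mul, Units.val_mul, dg_mul_dg]
    clear hL0 hnorm hU hmem
    -- entry equation helper
    have E : ∀ i j, (!![1 + X 0 * X 1, -(X 0) ^ 2; (X 1) ^ 2, 1 - X 0 * X 1] :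
        Matrix (Fin 2) (Fin 2) R') i j = (dg (w1 : R') (w2 : R') * prodE L) i j :=
      fun i j => by rw [hM]
    rcases L with _ | ⟨b1, T⟩
    · -- L = []
      have h01 := E 0 1
      rw [prodE_nil, mul_one] at h01
      have hl : (!![1 + X 0 * X 1, -(X 0) ^ 2; (X 1) ^ 2, 1 - X 0 * X 1] :
          Matrix (Fin 2) (Fin 2) R') 0 1 = -(X 0 ^ 2) := by simp
      have hr : (dg ((w1 : R')) ((w2 : R')) : Matrix (Fin 2) (Fin 2) R') 0 1 = 0 := by
        simp [dg]
      rw [hl, hr] at h01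
      exact pow_ne_zero 2 (X_ne_zero 0) (neg_eq_zero.1 h01)
    rcases T.eq_nil_or_concat with rfl | ⟨T0, bm, rfl⟩
    · -- L = [b1]
      have h11 := E 1 1
      rw [prodE_singleton] at h11
      have hr : (dg (w1 : R') (w2 : R') * Ee b1) 1 1 = 0 := by
        rw [dg_mul_1j, Ee_11, mul_zero]
      rw [hr] at h11
      have : (!![1 + X 0 * X 1, -(X 0) ^ 2; (X 1) ^ 2, 1 - X 0 * X 1] :
          Matrix (Fin 2) (Fin 2) R') 1 1 = 1 - X 0 * X 1 := by simp
      rw [this] at h11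
      exact one_sub_xy_ne_zero h11
    · -- L = b1 :: T0 ++ [bm]
      simp only [List.concat_eq_append] at E hgood
      have hTgood : ∀ a ∈ T0, a.totalDegree ≠ 0 := by
        intro a ha
        exact hgood a (by simp [ha])
      set G := prodE T0 with hG
      have hprod : prodE (b1 :: (T0 ++ [bm])) = Ee b1 * (G * Ee bm) := by
        rw [prodE_cons, prodE_append, prodE_singleton]
      -- the three entry equations
      have eq11 : (1 - X 0 * X 1 : R') = (w2 : R') * -(G 0 0) := by
        have h := E 1 1
        rw [hprod, dg_mul_1j, Ee_mul_1j, mul_Ee_01] at h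
        simpa using h
      have eq10 : (X 1 ^ 2 : R') = (w2 : R') * -(G 0 0 * bm - G 0 1) := by
        have h := E 1 0
        rw [hprod, dg_mul_1j, Ee_mul_1j, mul_Ee_00] at h
        simpa using h
      have eq01 : (-(X 0 ^ 2) : R') = (w1 : R') * (b1 * G 0 0 + G 1 0) := by
        have h := E 0 1
        rw [hprod, dg_mul_0j, Ee_mul_0j, mul_Ee_01, mul_Ee_11] at h
        simpa using h
      -- facts about G 0 0
      have hw2ne : (w2 : R') ≠ 0 := Units.ne_zero w2
      have hG00ne : G 0 0 ≠ 0 := by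
        intro h
        rw [h, neg_zero, mul_zero] at eq11
        exact one_sub_xy_ne_zero eq11
      have hdegG00 : (G 0 0).totalDegree = 2 := by
        have h := congrArg totalDegree eq11
        rw [deg_one_sub_xy, totalDegree_mul_eq' hw2ne (neg_ne_zero.2 hG00ne),
          unit_deg, totalDegree_neg, zero_add] at h
        omega
      rcases T0 with _ | ⟨t, T1⟩
      · -- T0 = [] : G = 1, G 0 0 = 1, degree 0 ≠ 2
        rw [hG, prodE_nil] at hdegG00
        simp [Matrix.one_apply] at hdegG00
      obtain ⟨hG0, hGsum, hGlt⟩ := degL (t :: T1) (List.cons_ne_nil t T1) hTgood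
      rw [← hG] at hG0 hGsum hGlt
      have hdegt : t.totalDegree ≠ 0 := hTgood t (by simp)
      rw [hdegG00] at hGsum hGlt
      rcases T1 with _ | ⟨s, T2⟩
      · -- T0 = [t]
        have hGt : G = Ee t := by rw [hG, prodE_singleton]
        have hg : G 0 0 = t := by rw [hGt]; rfl
        have hh : G 0 1 = 1 := by rw [hGt]; rfl
        rw [hg] at eq11
        rw [hg, hh] at eq10
        have hkey : (1 - X 0 * X 1 : R') * bm = X 1 ^ 2 - (w2 : R') := by
          linear_combination bm * eq11 - eq10
        have hbmne : bm ≠ 0 := by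
          intro h
          rw [h, mul_zero] at hkey
          have h2 := congrArg totalDegree hkey.symm
          rw [totalDegree_zero, sub_eq_add_neg, totalDegree_add_eq_left_of_totalDegree_lt
            (by rw [totalDegree_neg, unit_deg, totalDegree_X_pow]; omega),
            totalDegree_X_pow] at h2
          omega
        have hdegbm : bm.totalDegree = 0 := by
          have h1 := congrArg totalDegree hkey
          rw [totalDegree_mul_eq' one_sub_xy_ne_zero hbmne, deg_one_sub_xy,
            sub_eq_add_neg, totalDegree_add_eq_left_of_totalDegree_lt
            (by rw [totalDegree_neg, unit_deg, totalDegree_X_pow]; omega),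
            totalDegree_X_pow] at h1
          omega
        -- bm = C d, compare coefficients at y^2
        have hbmC : bm = C (coeff 0 bm) := const_eq_C hdegbm
        obtain ⟨e2, he2ne, he2⟩ := unit_exists_C w2
        have hco := congrArg (coeff (Finsupp.single 1 2)) hkey
        rw [hbmC, he2, mul_comm, coeff_C_mul, coeff_sub, coeff_sub, coeff_y2_one,
          coeff_y2_xy, coeff_y2_y2, coeff_y2_C] at hco
        simp at hco
      rcases T2 with _ | ⟨w3, T3⟩
      · -- T0 = [t, s]
        have hdegs : s.totalDegree ≠ 0 := hTgood s (by simp)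
        have hGts : G = Ee t * Ee s := by
          rw [hG, prodE_cons, prodE_singleton]
        have hg : G 0 0 = t * s + -1 := by
          rw [hGts, Ee_mul_0j]; simp
        have hh : G 0 1 = t := by
          rw [hGts, Ee_mul_0j]; simp
        have hu : G 1 0 = -s := by
          rw [hGts, Ee_mul_1j]; simp
        -- degree facts
        have hsum2 : t.totalDegree + s.totalDegree = 2 := by
          simp at hGsum
          omega
        have hdegt1 : t.totalDegree = 1 := by
          rw [hh] at hGlt
          omega
        have hdegs1 : s.totalDegree = 1 := by omega
        rw [hu] at eq01
        -- b1 constant or not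
        by_cases hb1deg : b1.totalDegree = 0
        · -- b1 = C c; coefficient comparison at xy forces c = 0, then degree contra
          have hb1C : b1 = C (coeff 0 b1) := const_eq_C hb1deg
          set c := coeff 0 b1 with hc
          rw [hb1C] at eq01
          have hkey2 : (w2 : R') * (-(X 0 ^ 2))
              = (w1 : R') * (C c * (-(1 - X 0 * X 1)) - (w2 : R') * s) := by
            linear_combination (w2 : R') * eq01 + ((w1 : R') * C c) * eq11
          obtain ⟨e1, he1ne, he1⟩ := unit_exists_C w1
          obtain ⟨e2, he2ne, he2⟩ := unit_exists_C w2
          have hco := congrArg (coeff (Finsupp.single 0 1 + Finsupp.single 1 1)) hkey2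
          have hcos : coeff (Finsupp.single 0 1 + Finsupp.single 1 1) s = 0 :=
            coeff_xy_of_deg_lt (by omega)
          rw [he1, he2, coeff_C_mul, coeff_C_mul, coeff_neg, coeff_xy_x2, coeff_sub,
            coeff_C_mul, coeff_C_mul, coeff_neg, coeff_sub, coeff_xy_one, coeff_xy_xy,
            hcos] at hco
          have hc0 : c = 0 := by
            field_simp at hco
            rcases mul_eq_zero.1 (show e1 * c = 0 by linear_combination -hco) with h | h
            · exact absurd h he1ne
            · exact h
          rw [hc0, C_0, zero_mul, zero_add] at eq01
          -- now -(x^2) = w1 * (-s), degree 2 = 1 contra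
          have h1 := congrArg totalDegree eq01
          rw [totalDegree_neg, totalDegree_X_pow,
            totalDegree_mul_eq' (Units.ne_zero w1)
              (neg_ne_zero.2 (ne_zero_of_deg_ne_zero hdegs)),
            unit_deg, totalDegree_neg, hdegs1] at h1
          omega
        · -- b1 nonconstant: degree blowup
          have hb1ne : b1 ≠ 0 := ne_zero_of_deg_ne_zero hb1deg
          have hbg : (b1 * G 0 0).totalDegree = b1.totalDegree + 2 := by
            rw [totalDegree_mul_eq' hb1ne hG00ne, hdegG00]
          have hsub : (b1 * G 0 0 + -s).totalDegree = b1.totalDegree + 2 := by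
            rw [totalDegree_add_eq_left_of_totalDegree_lt
              (by rw [totalDegree_neg, hbg, hdegs1]; omega), hbg]
          have h1 := congrArg totalDegree eq01
          rw [totalDegree_neg, totalDegree_X_pow,
            totalDegree_mul_eq' (Units.ne_zero w1) (by
              intro h
              rw [h, totalDegree_zero] at hsub
              omega),
            unit_deg, hsub] at h1
          omega
      · -- T0 length ≥ 3: impossible since degrees sum to 2
        have hd1 : 1 ≤ t.totalDegree := Nat.one_le_iff_ne_zero.2 (hTgood t (by simp))
        have hd2 : 1 ≤ s.totalDegree := Nat.one_le_iff_ne_zero.2 (hTgood s (by simp))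
        have hd3 : 1 ≤ w3.totalDegree := Nat.one_le_iff_ne_zero.2 (hTgood w3 (by simp))
        have hrest := list_length_le_sum (T3.map totalDegree)
          (fun a ha => by
            obtain ⟨b, hb, rfl⟩ := List.mem_map.1 ha
            exact Nat.one_le_iff_ne_zero.2 (hTgood b (by simp [hb])))
        simp only [List.map_cons, List.sum_cons] at hGsum
        omega
end

section
/- Let k be a field, let n ≥ 1, and let k[x₁,…,xₙ] be the polynomial algebra in n variables over k. Fix distinct indices i ≠ j, let α, β ∈ k be nonzero, let f lie in the k-subalgebra generated by the variables other than xᵢ and xⱼ, and let g lie in the k-subalgebra generated by the variables other than xⱼ. If φ and ψ are k-algebra automorphisms of k[x₁,…,xₙ] with φ(xᵢ) = α·xᵢ + f and φ(xₗ) = xₗ for l ≠ i, and ψ(xⱼ) = β·xⱼ + g and ψ(xₗ) = xₗ for l ≠ j, then the composition φ⁻¹∘ψ∘φ satisfies (φ⁻¹∘ψ∘φ)(xⱼ) = β·xⱼ + φ⁻¹(g) and (φ⁻¹∘ψ∘φ)(xₗ) = xₗ for all l ≠ j. (In the notation of the paper: σ(i,α,f)⁻¹σ(j,β,g)σ(i,α,f)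 = σ(j,β,σ(i,α,f)⁻¹(g)).) -/
open MvPolynomial

theorem AlgEquiv.apply_eq_self_of_mem_adjoin {R A : Type*} [CommSemiring R] [Semiring A]
    [Algebra R A] (e : A ≃ₐ[R] A) {s : Set A} (hs : ∀ x ∈ s, e x = x) {a : A}
    (ha : a ∈ Algebra.adjoin R s) : e a = a :=
  AlgHom.eqOn_adjoin_iff (φ := (e : A →ₐ[R] A)) (ψ := AlgHom.id R A) |>.2 hs ha

theorem elementary_conjugation_general (k : Type*) [Field k] (n : ℕ)
    (i j : Fin n) (hij : i ≠ j)
    (α β : k)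
    (f g : MvPolynomial (Fin n) k)
    (hf : f ∈ Algebra.adjoin k
      (X '' {l : Fin n | l ≠ i ∧ l ≠ j} : Set (MvPolynomial (Fin n) k)))
    (φ ψ : MvPolynomial (Fin n) k ≃ₐ[k] MvPolynomial (Fin n) k)
    (hφi : φ (X i) = C α * X i + f)
    (hφ : ∀ l : Fin n, l ≠ i → φ (X l) = X l)
    (hψj : ψ (X j) = C β * X j + g)
    (hψ : ∀ l : Fin n, l ≠ j → ψ (X l) = X l) :
    φ.symm (ψ (φ (X j))) = C β * X j + φ.symm g ∧
    ∀ l : Fin n, l ≠ j → φ.symm (ψ (φ (X l))) = X l := by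
  have hφ_symm (l : Fin n) (hl : l ≠ i) : φ.symm (X l) = X l :=
    φ.symm_apply_eq.2 (hφ l hl).symm
  have hψf : ψ f = f :=
    ψ.apply_eq_self_of_mem_adjoin (Set.forall_mem_image.2 fun l hl => hψ l hl.2) hf
  refine ⟨?_, fun l hl => ?_⟩
  · rw [hφ j hij.symm, hψj, map_add, C_mul', map_smul, hφ_symm j hij.symm]
  · obtain rfl | hli := eq_or_ne l i
    · rw [hφi, map_add, C_mul', map_smul, hψ l hl, hψf, ← C_mul', ← hφi, φ.symm_apply_apply]
    · rw [hφ l hli, hψ l hl, hφ_symm l hli]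

/-- Relation `σ(i,α,f)⁻¹ σ(j,β,g) σ(i,α,f) = σ(j,β,σ(i,α,f)⁻¹(g))` for elementary
automorphisms of the polynomial algebra `k[x₁,…,xₙ]`, where `i ≠ j`, `f` lies in the
subalgebra generated by the variables other than `xᵢ, xⱼ`, and `g` lies in the
subalgebra generated by the variables other than `xⱼ`. -/
theorem elementary_conjugation (k : Type*) [Field k] (n : ℕ) (hn : 1 ≤ n)
    (i j : Fin n) (hij : i ≠ j)
    (α β : k) (hα : α ≠ 0) (hβ : β ≠ 0)
    (f g : MvPolynomial (Fin n) k)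
    (hf : f ∈ Algebra.adjoin k
      (X '' {l : Fin n | l ≠ i ∧ l ≠ j} : Set (MvPolynomial (Fin n) k)))
    (hg : g ∈ Algebra.adjoin k (X '' {l : Fin n | l ≠ j} : Set (MvPolynomial (Fin n) k)))
    (φ ψ : MvPolynomial (Fin n) k ≃ₐ[k] MvPolynomial (Fin n) k)
    (hφi : φ (X i) = C α * X i + f)
    (hφ : ∀ l : Fin n, l ≠ i → φ (X l) = X l)
    (hψj : ψ (X j) = C β * X j + g)
    (hψ : ∀ l : Fin n, l ≠ j → ψ (X l) = X l) :
    φ.symm (ψ (φ (X j))) = C β * X j + φ.symm g ∧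
    ∀ l : Fin n, l ≠ j → φ.symm (ψ (φ (X l))) = X l :=
  elementary_conjugation_general k n i j hij α β f g hf φ ψ hφi hφ hψj hψ
end
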